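/- Let ρ be a state on ℂ^d and A = (A_1, …, A_m) a POVM with all elements nonzero. If any one of the six Hermitian positive semidefinite matrices G_S(ρ,A), G_L(ρ,A), G_R(ρ,A), Ḡ_S(ρ,A), Ḡ_L(ρ,A), Ḡ_R(ρ,A) is idempotent, then all six are idempotent. -/

import Mathlib

open Matrix
open scoped ComplexOrder

def IsPOVM {d m : ℕ} (A : Fin m → Matrix (Fin d) (Fin d) ℂ) : Prop :=
  (∀ j, (A j).PosSemidef) ∧ ∑ j, A j = 1

/-- The outcome probabilities `p_j = tr(ρ A_j)` (a real number). -/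
noncomputable def pvec {d m : ℕ} (ρ : Matrix (Fin d) (Fin d) ℂ)
    (A : Fin m → Matrix (Fin d) (Fin d) ℂ) (j : Fin m) : ℝ :=
  ((ρ * A j).trace).re

/-- The column vector `√p` with entries `√(p_j)`. -/
noncomputable def sqrtp {d m : ℕ} (ρ : Matrix (Fin d) (Fin d) ℂ)
    (A : Fin m → Matrix (Fin d) (Fin d) ℂ) (j : Fin m) : ℂ :=
  (Real.sqrt (pvec ρ A j) : ℂ)

/-- Gram matrix `G_S(ρ,A)`. -/
noncomputable def GmS {d m : ℕ} (ρ : Matrix (Fin d) (Fin d) ℂ)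
    (A : Fin m → Matrix (Fin d) (Fin d) ℂ) : Matrix (Fin m) (Fin m) ℂ :=
  Matrix.of fun j k =>
    ((ρ * (A k * A j)).trace + (ρ * (A j * A k)).trace) /
      (2 * (Real.sqrt (pvec ρ A j * pvec ρ A k) : ℂ))

/-- Gram matrix `G_L(ρ,A)`. -/
noncomputable def GmL {d m : ℕ} (ρ : Matrix (Fin d) (Fin d) ℂ)
    (A : Fin m → Matrix (Fin d) (Fin d) ℂ) : Matrix (Fin m) (Fin m) ℂ :=
  Matrix.of fun j k =>
    (ρ * (A k * A j)).trace / (Real.sqrt (pvec ρ A j * pvec ρ A k) : ℂ)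

/-- Gram matrix `G_R(ρ,A)`. -/
noncomputable def GmR {d m : ℕ} (ρ : Matrix (Fin d) (Fin d) ℂ)
    (A : Fin m → Matrix (Fin d) (Fin d) ℂ) : Matrix (Fin m) (Fin m) ℂ :=
  Matrix.of fun j k =>
    (ρ * (A j * A k)).trace / (Real.sqrt (pvec ρ A j * pvec ρ A k) : ℂ)

/-- `Ḡ_S(ρ,A) = G_S(ρ,A) − √p (√p)ᵀ`. -/
noncomputable def GmSbar {d m : ℕ} (ρ : Matrix (Fin d) (Fin d) ℂ)
    (A : Fin m → Matrix (Fin d) (Fin d) ℂ) : Matrix (Fin m) (Fin m) ℂ :=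
  GmS ρ A - Matrix.vecMulVec (sqrtp ρ A) (sqrtp ρ A)

/-- `Ḡ_L(ρ,A) = G_L(ρ,A) − √p (√p)ᵀ`. -/
noncomputable def GmLbar {d m : ℕ} (ρ : Matrix (Fin d) (Fin d) ℂ)
    (A : Fin m → Matrix (Fin d) (Fin d) ℂ) : Matrix (Fin m) (Fin m) ℂ :=
  GmL ρ A - Matrix.vecMulVec (sqrtp ρ A) (sqrtp ρ A)

/-- `Ḡ_R(ρ,A) = G_R(ρ,A) − √p (√p)ᵀ`. -/
noncomputable def GmRbar {d m : ℕ} (ρ : Matrix (Fin d) (Fin d) ℂ)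
    (A : Fin m → Matrix (Fin d) (Fin d) ℂ) : Matrix (Fin m) (Fin m) ℂ :=
  GmR ρ A - Matrix.vecMulVec (sqrtp ρ A) (sqrtp ρ A)

set_option linter.unusedSectionVars false
set_option maxHeartbeats 1000000

section Helpers

variable {ι : Type*} [Fintype ι] [DecidableEq ι]

/-- entry-sum-of-squares of a complex matrix -/
noncomputable def nsq (M : Matrix ι ι ℂ) : ℝ := ∑ i, ∑ j, Complex.normSq (M i j)

lemma nsq_nonneg (M : Matrix ι ι ℂ) : 0 ≤ nsq M :=
  Finset.sum_nonneg fun _ _ => Finset.sum_nonneg fun _ _ => Complex.normSq_nonneg _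

lemma trace_ctm (M : Matrix ι ι ℂ) : (Mᴴ * M).trace = ((nsq M : ℝ) : ℂ) := by
  rw [Matrix.trace, nsq]
  push_cast
  rw [Finset.sum_comm]
  refine Finset.sum_congr rfl fun i _ => ?_
  rw [Matrix.diag_apply, Matrix.mul_apply]
  refine Finset.sum_congr rfl fun j _ => ?_
  rw [Matrix.conjTranspose_apply, ← Complex.mul_conj (M j i)]
  exact mul_comm _ _

lemma trace_ctm_zero {M : Matrix ι ι ℂ} (h : (Mᴴ * M).trace = 0) : M = 0 := by
  rw [trace_ctm] at h
  have h' : nsq M = 0 := by exact_mod_cast h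
  rw [nsq] at h'
  ext i j
  have h1 := (Finset.sum_eq_zero_iff_of_nonneg (fun i _ => Finset.sum_nonneg
    (fun j _ => Complex.normSq_nonneg (M i j)))).mp h' i (Finset.mem_univ i)
  have h2 := (Finset.sum_eq_zero_iff_of_nonneg
    (fun j _ => Complex.normSq_nonneg (M i j))).mp h1 j (Finset.mem_univ j)
  simpa using Complex.normSq_eq_zero.mp h2

lemma trace_ctm_nonneg (M : Matrix ι ι ℂ) : 0 ≤ (Mᴴ * M).trace := by
  rw [trace_ctm]; exact_mod_cast Complex.zero_le_real.mpr (nsq_nonneg M)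

open scoped MatrixOrder in
lemma psd_sqrt_ex {X : Matrix ι ι ℂ} (h : X.PosSemidef) :
    ∃ S : Matrix ι ι ℂ, S.PosSemidef ∧ S * S = X :=
  ⟨CFC.sqrt X, (CFC.sqrt_nonneg X).posSemidef, CFC.sqrt_mul_sqrt_self X h.nonneg⟩

lemma psd_ctm {X : Matrix ι ι ℂ} (h : X.PosSemidef) : ∃ B : Matrix ι ι ℂ, X = Bᴴ * B := by
  obtain ⟨S, hS, hSS⟩ := psd_sqrt_ex h
  exact ⟨S, by rw [show Sᴴ = S from hS.1, hSS]⟩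

lemma psd_trace_nonneg {X : Matrix ι ι ℂ} (h : X.PosSemidef) : 0 ≤ X.trace := by
  obtain ⟨B, rfl⟩ := psd_ctm h
  exact trace_ctm_nonneg B

lemma psd_trace_zero {X : Matrix ι ι ℂ} (h : X.PosSemidef) (ht : X.trace = 0) : X = 0 := by
  obtain ⟨B, rfl⟩ := psd_ctm h
  rw [trace_ctm_zero ht, Matrix.mul_zero]

open scoped ComplexInnerProductSpace in
lemma trace_ctm_cs (M N : Matrix ι ι ℂ) :
    Complex.normSq ((Mᴴ * N).trace) ≤ nsq M * nsq N := by
  classical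
  set x : EuclideanSpace ℂ (ι × ι) := WithLp.toLp 2 (fun p : ι × ι => M p.2 p.1) with hx
  set y : EuclideanSpace ℂ (ι × ι) := WithLp.toLp 2 (fun p : ι × ι => N p.2 p.1) with hy
  have key : ⟪x, y⟫ = (Mᴴ * N).trace := by
    rw [PiLp.inner_apply, Matrix.trace]
    rw [Fintype.sum_prod_type]
    refine Finset.sum_congr rfl fun i _ => ?_
    rw [Matrix.diag_apply, Matrix.mul_apply]
    refine Finset.sum_congr rfl fun j _ => ?_
    simp [hx, hy, Matrix.conjTranspose_apply, RCLike.inner_apply, mul_comm]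
  have hnx : ‖x‖ ^ 2 = nsq M := by
    rw [EuclideanSpace.norm_eq, Real.sq_sqrt (by positivity), nsq, Fintype.sum_prod_type,
      Finset.sum_comm]
    refine Finset.sum_congr rfl fun i _ => Finset.sum_congr rfl fun j _ => ?_
    rw [← Complex.sq_norm]
  have hny : ‖y‖ ^ 2 = nsq N := by
    rw [EuclideanSpace.norm_eq, Real.sq_sqrt (by positivity), nsq, Fintype.sum_prod_type,
      Finset.sum_comm]
    refine Finset.sum_congr rfl fun i _ => Finset.sum_congr rfl fun j _ => ?_
    rw [← Complex.sq_norm]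
  calc Complex.normSq ((Mᴴ * N).trace) = ‖⟪x, y⟫‖ ^ 2 := by
        rw [key, Complex.sq_norm]
    _ ≤ (‖x‖ * ‖y‖) ^ 2 := by
        exact pow_le_pow_left₀ (norm_nonneg _) (norm_inner_le_norm (𝕜 := ℂ) x y) 2
    _ = nsq M * nsq N := by rw [mul_pow, hnx, hny]

variable {n : Type*} [Fintype n] [DecidableEq n]

lemma gram_herm {X : Matrix n n ℂ} {u : n → Matrix ι ι ℂ}
    (hf : ∀ k j, ((u k)ᴴ * u j).trace = X k j) : ∀ k j, star (X k j) = X j k := by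
  intro k j
  rw [← hf, ← hf, ← Matrix.trace_conjTranspose, Matrix.conjTranspose_mul,
    Matrix.conjTranspose_conjTranspose]

lemma gram_fix {G : Matrix n n ℂ} {v : n → Matrix ι ι ℂ}
    (hf : ∀ k j, ((v k)ᴴ * v j).trace = G k j) (hGG : G * G = G) (i : n) :
    ∑ j, G j i • v j = v i := by
  have hherm := gram_herm hf
  set Mi := (∑ j, G j i • v j) - v i with hMi
  have hMiH : Miᴴ = (∑ j, star (G j i) • (v j)ᴴ) - (v i)ᴴ := by
    simp [hMi, Matrix.conjTranspose_sub, Matrix.conjTranspose_sum, Matrix.conjTranspose_smul]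
  have hG2 : ∀ a b : n, ∑ j, G a j * G j b = G a b := by
    intro a b
    have := congrArg (fun M : Matrix n n ℂ => M a b) hGG
    simpa [Matrix.mul_apply] using this
  have hG3 : ∑ j, ∑ k, G i j * (G j k * G k i) = G i i := by
    have h1 : ∀ j, ∑ k, G i j * (G j k * G k i) = G i j * G j i := by
      intro j
      rw [← Finset.mul_sum, hG2]
    rw [Finset.sum_congr rfl fun j _ => h1 j, hG2]
  have key : (Miᴴ * Mi).trace = 0 := by
    rw [hMiH, hMi, Matrix.sub_mul, Matrix.mul_sub, Matrix.mul_sub]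
    rw [Matrix.trace_sub, Matrix.trace_sub, Matrix.trace_sub]
    have e1 : ((∑ j, star (G j i) • (v j)ᴴ) * ∑ k, G k i • v k).trace
        = ∑ j, ∑ k, star (G j i) * (G k i * ((v j)ᴴ * v k).trace) := by
      rw [Finset.sum_mul, Matrix.trace_sum]
      refine Finset.sum_congr rfl fun j _ => ?_
      rw [Matrix.mul_sum, Matrix.trace_sum]
      simp only [Matrix.smul_mul, Matrix.mul_smul, Matrix.trace_smul, smul_eq_mul]
      exact Finset.sum_congr rfl fun k _ => by ring
    have e2 : ((∑ j, star (G j i) • (v j)ᴴ) * v i).trace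
        = ∑ j, star (G j i) * ((v j)ᴴ * v i).trace := by
      rw [Finset.sum_mul, Matrix.trace_sum]
      simp only [Matrix.smul_mul, Matrix.trace_smul, smul_eq_mul]
    have e3 : ((v i)ᴴ * ∑ k, G k i • v k).trace
        = ∑ k, G k i * ((v i)ᴴ * v k).trace := by
      rw [Matrix.mul_sum, Matrix.trace_sum]
      simp only [Matrix.mul_smul, Matrix.trace_smul, smul_eq_mul]
    rw [e1, e2, e3]
    simp only [hf, hherm]
    have t1 : ∑ j, ∑ k, G i j * (G k i * G j k) = G i i := by
      rw [← hG3]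
      exact Finset.sum_congr rfl fun j _ => Finset.sum_congr rfl fun k _ => by ring
    have t2 : ∑ j, G i j * G j i = G i i := hG2 i i
    have t3 : ∑ k, G k i * G i k = G i i := by
      rw [← hG2 i i]
      exact Finset.sum_congr rfl fun k _ => by ring
    rw [t1, t2, t3]
    ring
  have := trace_ctm_zero key
  rw [hMi] at this
  exact sub_eq_zero.mp this

lemma gram_pair {X : Matrix n n ℂ} {u : n → Matrix ι ι ℂ}
    (hf : ∀ k j, ((u k)ᴴ * u j).trace = X k j) {f : n → ℂ} {i : n}
    (h : ∑ j, f j • u j = u i) (k : n) : ∑ j, f j * X k j = X k i := by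
  have h2 := congrArg (fun Z => ((u k)ᴴ * Z).trace) h
  simp only [Matrix.mul_sum, Matrix.mul_smul, Matrix.trace_sum, Matrix.trace_smul,
    smul_eq_mul, hf] at h2
  exact h2

lemma gram_quad {X : Matrix n n ℂ} {u : n → Matrix ι ι ℂ}
    (hf : ∀ k j, ((u k)ᴴ * u j).trace = X k j) (x : n → ℂ) :
    star x ⬝ᵥ X *ᵥ x = ((∑ j, x j • u j)ᴴ * (∑ j, x j • u j)).trace := by
  rw [Matrix.conjTranspose_sum, Finset.sum_mul]
  simp only [Matrix.conjTranspose_smul, Matrix.smul_mul, Matrix.mul_sum, Matrix.mul_smul,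
    Matrix.trace_sum, Matrix.trace_smul, smul_eq_mul, hf]
  rw [dotProduct, Finset.sum_congr rfl (fun k _ => ?_)]
  rw [Matrix.mulVec, dotProduct, Finset.mul_sum, Pi.star_apply]
  exact Finset.sum_congr rfl fun j _ => by rw [RCLike.star_def]; ring

lemma gram_psd {X : Matrix n n ℂ} {u : n → Matrix ι ι ℂ}
    (hf : ∀ k j, ((u k)ᴴ * u j).trace = X k j) : X.PosSemidef := by
  have hherm := gram_herm hf
  refine Matrix.PosSemidef.of_dotProduct_mulVec_nonneg ?_ ?_
  · ext k j
    rw [Matrix.conjTranspose_apply]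
    exact hherm j k
  · intro x
    rw [gram_quad hf x]
    exact trace_ctm_nonneg _

lemma core_proj {P G H : Matrix n n ℂ} (hPH : Pᴴ = P) (hPP : P * P = P)
    (hG : G.PosSemidef) (hGI : ((1 : Matrix n n ℂ) - G).PosSemidef) (hH : H.PosSemidef)
    (hsum : G + H = P + P) (htr : G.trace = P.trace) : G = P := by
  set Q : Matrix n n ℂ := 1 - P with hQ
  have hQH : Qᴴ = Q := by rw [hQ, Matrix.conjTranspose_sub, Matrix.conjTranspose_one, hPH]
  have hQP : Q * P = 0 := by rw [hQ, Matrix.sub_mul, Matrix.one_mul, hPP, sub_self]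
  have hX : (Q * G * Q).PosSemidef := by have := hG.mul_mul_conjTranspose_same Q; rwa [hQH] at this
  have hY : (Q * H * Q).PosSemidef := by have := hH.mul_mul_conjTranspose_same Q; rwa [hQH] at this
  have hXY : Q * G * Q + Q * H * Q = 0 := by
    have : Q * G * Q + Q * H * Q = Q * (G + H) * Q := by
      rw [Matrix.mul_add, Matrix.add_mul]
    rw [this, hsum, Matrix.mul_add, hQP, Matrix.add_mul, Matrix.zero_mul, add_zero]
  have htrX : (Q * G * Q).trace = 0 := by
    have h1 := psd_trace_nonneg hX
    have h2 := psd_trace_nonneg hY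
    have h3 : (Q * G * Q).trace + (Q * H * Q).trace = 0 := by
      rw [← Matrix.trace_add, hXY, Matrix.trace_zero]
    have h4 : (Q * G * Q).trace = -(Q * H * Q).trace := by
      rw [eq_neg_iff_add_eq_zero]; exact h3
    have : (Q * G * Q).trace ≤ 0 := h4 ▸ (neg_nonpos.mpr h2)
    exact le_antisymm this h1
  have hQGQ : Q * G * Q = 0 := psd_trace_zero hX htrX
  obtain ⟨C, hC⟩ := psd_ctm hG
  have hCQ : C * Q = 0 := by
    have : (C * Q)ᴴ * (C * Q) = 0 := by
      rw [Matrix.conjTranspose_mul, hQH]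
      calc Q * Cᴴ * (C * Q) = Q * (Cᴴ * C) * Q := by
            rw [Matrix.mul_assoc, Matrix.mul_assoc, Matrix.mul_assoc]
        _ = 0 := by rw [← hC, hQGQ]
    exact Matrix.conjTranspose_mul_self_eq_zero.mp this
  have hGQ : G * Q = 0 := by
    rw [hC, Matrix.mul_assoc, hCQ, Matrix.mul_zero]
  have hQG : Q * G = 0 := by
    have := congrArg Matrix.conjTranspose hGQ
    rwa [Matrix.conjTranspose_mul, hQH, hG.1, Matrix.conjTranspose_zero] at this
  have hGP : G * P = G := by
    have : G * (1 - P) = 0 := hGQ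
    rw [Matrix.mul_sub, Matrix.mul_one, sub_eq_zero] at this
    exact this.symm
  have hPG : P * G = G := by
    have : (1 - P) * G = 0 := hQG
    rw [Matrix.sub_mul, Matrix.one_mul, sub_eq_zero] at this
    exact this.symm
  have hPGrepr : P - G = P * (1 - G) * P := by
    rw [Matrix.mul_sub, Matrix.mul_one, Matrix.sub_mul, hPP, hPG, hGP]
  have hfin : (P - G).PosSemidef := by
    rw [hPGrepr]
    have := hGI.mul_mul_conjTranspose_same P
    rwa [hPH] at this
  have htrPG : (P - G).trace = 0 := by rw [Matrix.trace_sub, htr, sub_self]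
  have := psd_trace_zero hfin htrPG
  rw [sub_eq_zero] at this
  exact this.symm

lemma bar_iff {X W : Matrix n n ℂ} (h1 : X * W = W) (h2 : W * X = W) (h3 : W * W = W) :
    ((X - W) * (X - W) = X - W) ↔ (X * X = X) := by
  have key : (X - W) * (X - W) = X * X - W := by
    rw [Matrix.sub_mul, Matrix.mul_sub, Matrix.mul_sub, h1, h2, h3]
    abel
  rw [key]
  constructor
  · intro h
    have := congrArg (· + W) h
    simpa using this
  · intro h
    rw [h]

lemma half_cancel_c {a b : ℂ} (h : a + a = b + b) : a = b := by
  have h2 : (2 : ℂ) * a = 2 * b := by rw [two_mul, two_mul]; exact h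
  exact mul_left_cancel₀ two_ne_zero h2

lemma half_cancel {X Y : Matrix n n ℂ} (h : X + X = Y + Y) : X = Y := by
  have h2 : (2 : ℂ) • X = (2 : ℂ) • Y := by rw [two_smul, two_smul]; exact h
  exact smul_right_injective _ (two_ne_zero) h2

end Helpers

/-- If any one of `G_S`, `G_L`, `G_R`, `Ḡ_S`, `Ḡ_L`, `Ḡ_R` is idempotent at a
full-rank state, then all six are. -/
theorem stmt_17 {d m : ℕ}
    (ρ : Matrix (Fin d) (Fin d) ℂ) (hρ : ρ.PosDef) (hρtr : ρ.trace = 1)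
    (A : Fin m → Matrix (Fin d) (Fin d) ℂ)
    (hA : IsPOVM A) (hA0 : ∀ j, A j ≠ 0)
    (h : GmS ρ A * GmS ρ A = GmS ρ A ∨ GmL ρ A * GmL ρ A = GmL ρ A ∨
      GmR ρ A * GmR ρ A = GmR ρ A ∨ GmSbar ρ A * GmSbar ρ A = GmSbar ρ A ∨
      GmLbar ρ A * GmLbar ρ A = GmLbar ρ A ∨ GmRbar ρ A * GmRbar ρ A = GmRbar ρ A) :
    GmS ρ A * GmS ρ A = GmS ρ A ∧ GmL ρ A * GmL ρ A = GmL ρ A ∧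
      GmR ρ A * GmR ρ A = GmR ρ A ∧ GmSbar ρ A * GmSbar ρ A = GmSbar ρ A ∧
      GmLbar ρ A * GmLbar ρ A = GmLbar ρ A ∧ GmRbar ρ A * GmRbar ρ A = GmRbar ρ A := by
  classical
  obtain ⟨hApsd, hAsum⟩ := hA
  have hAh : ∀ j, (A j)ᴴ = A j := fun j => (hApsd j).1
  -- square root of ρ
  obtain ⟨σ, hσpsd, hσσ⟩ := psd_sqrt_ex hρ.posSemidef
  have hσh : σᴴ = σ := hσpsd.1
  have hσdet : IsUnit σ.det := by
    have h1 : IsUnit ρ.det := (Matrix.isUnit_iff_isUnit_det ρ).mp hρ.isUnit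
    rw [← hσσ, Matrix.det_mul] at h1
    exact isUnit_of_mul_isUnit_left h1
  have hcancel : ∀ {X Y : Matrix (Fin d) (Fin d) ℂ}, σ * X = σ * Y → X = Y := by
    intro X Y hXY
    have h2 := congrArg (fun M => σ⁻¹ * M) hXY
    simpa [← Matrix.mul_assoc, Matrix.nonsing_inv_mul σ hσdet] using h2
  -- positivity of probabilities
  have hNpsd : ∀ j, (σ * A j * σ).PosSemidef := by
    intro j
    have := (hApsd j).mul_mul_conjTranspose_same σ
    rwa [hσh] at this
  have htrNeq : ∀ j, (ρ * A j).trace = (σ * A j * σ).trace := by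
    intro j
    rw [← hσσ, Matrix.mul_assoc, Matrix.trace_mul_comm σ, Matrix.mul_assoc]
  have htrnn : ∀ j, 0 ≤ (ρ * A j).trace := by
    intro j; rw [htrNeq j]; exact psd_trace_nonneg (hNpsd j)
  have hp : ∀ j, 0 < pvec ρ A j := by
    intro j
    have h0 := htrnn j
    rw [Complex.le_def] at h0
    rcases lt_or_eq_of_le h0.1 with hlt | heq
    · exact hlt
    · exfalso
      have hz : (ρ * A j).trace = 0 := by
        apply Complex.ext
        · simpa using heq.symm
        · simpa using h0.2.symm
      rw [htrNeq j] at hz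
      have := psd_trace_zero (hNpsd j) hz
      -- σ * A j * σ = 0 → A j = 0
      apply hA0 j
      have h1 : σ * (A j * σ) = σ * 0 := by
        rw [Matrix.mul_zero, ← Matrix.mul_assoc]; exact this
      have h2 : A j * σ = 0 := hcancel h1
      have h3 : σ * (A j)ᴴ = σ * 0 := by
        rw [Matrix.mul_zero]
        have h2' := congrArg Matrix.conjTranspose h2
        rwa [Matrix.conjTranspose_mul, hσh, Matrix.conjTranspose_zero] at h2'
      have h4 : (A j)ᴴ = 0 := hcancel h3
      rwa [hAh j] at h4
  have htr_real : ∀ j, (ρ * A j).trace = ((pvec ρ A j : ℝ) : ℂ) := by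
    intro j
    have h0 := htrnn j
    rw [Complex.le_def] at h0
    apply Complex.ext
    · simp [pvec]
    · simp [← h0.2]
  -- notation
  set p : Fin m → ℝ := pvec ρ A with hpdef
  set w : Fin m → ℂ := sqrtp ρ A with hwdef
  have hwj : ∀ j, w j = ((Real.sqrt (p j) : ℝ) : ℂ) := fun j => rfl
  have hw0 : ∀ j, w j ≠ 0 := by
    intro j
    rw [hwj j]
    exact Complex.ofReal_ne_zero.mpr (ne_of_gt (Real.sqrt_pos.mpr (hp j)))
  have hww : ∀ j, w j * w j = ((p j : ℝ) : ℂ) := by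
    intro j
    rw [hwj j, ← Complex.ofReal_mul, Real.mul_self_sqrt (hp j).le]
  have hwstar : ∀ j, star (w j) = w j := by
    intro j; rw [hwj j]; exact Complex.conj_ofReal _
  set c : Fin m → ℂ := fun j => (w j)⁻¹ with hcdef
  have hc0 : ∀ j, c j ≠ 0 := fun j => inv_ne_zero (hw0 j)
  have hcw : ∀ j, c j * w j = 1 := fun j => inv_mul_cancel₀ (hw0 j)
  have hwc : ∀ j, w j * c j = 1 := fun j => mul_inv_cancel₀ (hw0 j)
  have hcstar : ∀ j, star (c j) = c j := by
    intro j
    show star ((w j)⁻¹) = (w j)⁻¹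
    rw [star_inv₀, hwstar]
  set B : Fin m → Matrix (Fin d) (Fin d) ℂ := fun j => c j • A j with hBdef
  have hBh : ∀ j, (B j)ᴴ = B j := by
    intro j; rw [hBdef]; simp [Matrix.conjTranspose_smul, hcstar, hAh]
  set v : Fin m → Matrix (Fin d) (Fin d) ℂ := fun j => σ * B j with hvdef
  set u : Fin m → Matrix (Fin d) (Fin d) ℂ := fun j => B j * σ with hudef
  set G : Matrix (Fin m) (Fin m) ℂ := GmL ρ A with hGdef
  set R : Matrix (Fin m) (Fin m) ℂ := GmR ρ A with hRdef
  set S : Matrix (Fin m) (Fin m) ℂ := GmS ρ A with hSdef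
  set W : Matrix (Fin m) (Fin m) ℂ := Matrix.vecMulVec w w with hWdef
  have hsqc : ∀ j k, ((Real.sqrt (p j * p k) : ℝ) : ℂ) = w j * w k := by
    intro j k
    rw [Real.sqrt_mul (hp j).le, Complex.ofReal_mul, hwj j, hwj k]
  -- entry formulas
  have hGentry : ∀ j k, G j k = (ρ * (A k * A j)).trace * (c j * c k) := by
    intro j k
    show (ρ * (A k * A j)).trace / ((Real.sqrt (p j * p k) : ℝ) : ℂ) = _
    rw [hsqc, div_eq_mul_inv, mul_inv, hcdef]
  have hRentry : ∀ j k, R j k = (ρ * (A j * A k)).trace * (c j * c k) := by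
    intro j k
    show (ρ * (A j * A k)).trace / ((Real.sqrt (p j * p k) : ℝ) : ℂ) = _
    rw [hsqc, div_eq_mul_inv, mul_inv, hcdef]
  have hSentry : ∀ j k,
      S j k = ((ρ * (A k * A j)).trace + (ρ * (A j * A k)).trace) / (2 * (w j * w k)) := by
    intro j k
    show _ / (2 * ((Real.sqrt (p j * p k) : ℝ) : ℂ)) = _
    rw [hsqc]
  -- trace rearrangement helper
  have trh : ∀ (X Y : Matrix (Fin d) (Fin d) ℂ),
      ((X * σ) * (σ * Y)).trace = (ρ * (Y * X)).trace := by
    intro X Y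
    rw [← hσσ]
    rw [Matrix.mul_assoc, Matrix.trace_mul_comm X]
    rw [Matrix.mul_assoc, Matrix.mul_assoc, Matrix.mul_assoc]
  -- Gram representations
  have hfG : ∀ k j, ((v k)ᴴ * v j).trace = G k j := by
    intro k j
    have hvH : (v k)ᴴ = c k • (A k * σ) := by
      rw [hvdef]
      simp only [hBdef]
      rw [Matrix.mul_smul, Matrix.conjTranspose_smul, Matrix.conjTranspose_mul, hσh, hAh, hcstar]
    have hvj : v j = c j • (σ * A j) := by
      rw [hvdef]; simp only [hBdef]; rw [Matrix.mul_smul]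
    rw [hvH, hvj, Matrix.smul_mul, Matrix.mul_smul, Matrix.trace_smul, Matrix.trace_smul,
      smul_eq_mul, smul_eq_mul, trh (A k) (A j), hGentry]
    ring
  have hfR : ∀ k j, ((u k)ᴴ * u j).trace = R k j := by
    intro k j
    have huH : (u k)ᴴ = c k • (σ * A k) := by
      rw [hudef]
      simp only [hBdef]
      rw [Matrix.smul_mul, Matrix.conjTranspose_smul, Matrix.conjTranspose_mul, hσh, hAh, hcstar]
    have huj : u j = c j • (A j * σ) := by
      rw [hudef]; simp only [hBdef]; rw [Matrix.smul_mul]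
    rw [huH, huj, Matrix.smul_mul, Matrix.mul_smul, Matrix.trace_smul, Matrix.trace_smul,
      smul_eq_mul, smul_eq_mul]
    have : ((σ * A k) * (A j * σ)).trace = (ρ * (A k * A j)).trace := by
      rw [Matrix.trace_mul_comm, trh (A j) (A k)]
    rw [this, hRentry]
    ring
  have hGpsd : G.PosSemidef := gram_psd hfG
  have hRpsd : R.PosSemidef := gram_psd hfR
  have hGherm : Gᴴ = G := hGpsd.1
  have hRherm : Rᴴ = R := hRpsd.1
  have hghe := gram_herm hfG
  -- R = Gᵀ
  have hRT : R = Gᵀ := by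
    ext j k
    rw [Matrix.transpose_apply, hRentry, hGentry]
    ring
  -- G + R = S + S
  have hGRS : G + R = S + S := by
    ext j k
    rw [Matrix.add_apply, Matrix.add_apply, hGentry, hRentry, hSentry]
    have hcc : c j * c k = (w j * w k)⁻¹ := by
      show (w j)⁻¹ * (w k)⁻¹ = _
      rw [mul_inv]
    rw [hcc, ← add_mul]
    rw [← add_div]
    rw [eq_div_iff (mul_ne_zero two_ne_zero (mul_ne_zero (hw0 j) (hw0 k)))]
    have hq := inv_mul_cancel₀ (mul_ne_zero (hw0 j) (hw0 k))
    linear_combination (((ρ * (A k * A j)).trace + (ρ * (A j * A k)).trace) * 2) * hq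
  -- S hermitian
  have hSherm : Sᴴ = S := by
    have h1 := congrArg Matrix.conjTranspose hGRS
    rw [Matrix.conjTranspose_add, hGherm, hRherm, hGRS, Matrix.conjTranspose_add] at h1
    exact half_cancel h1.symm
  -- sums against w
  have hsumtr : ∀ j, ∑ k, (ρ * (A k * A j)).trace = ((p j : ℝ) : ℂ) := by
    intro j
    rw [← htr_real j]
    rw [← Matrix.trace_sum]
    congr 1
    rw [← Matrix.mul_sum, ← Finset.sum_mul, hAsum, Matrix.one_mul]
  have hsumtr' : ∀ j, ∑ k, (ρ * (A j * A k)).trace = ((p j : ℝ) : ℂ) := by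
    intro j
    rw [← htr_real j]
    rw [← Matrix.trace_sum]
    congr 1
    rw [← Matrix.mul_sum, ← Matrix.mul_sum, hAsum, Matrix.mul_one]
  have hGw : G *ᵥ w = w := by
    ext j
    rw [Matrix.mulVec, dotProduct]
    have : ∀ k, G j k * w k = (ρ * (A k * A j)).trace * c j := by
      intro k
      rw [hGentry]
      have : c j * c k * w k = c j := by rw [mul_assoc, hcw, mul_one]
      rw [mul_assoc, this]
    rw [Finset.sum_congr rfl fun k _ => this k, ← Finset.sum_mul, hsumtr j]
    rw [← hww j, mul_assoc, hwc j, mul_one]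
  have hRw : R *ᵥ w = w := by
    ext j
    rw [Matrix.mulVec, dotProduct]
    have : ∀ k, R j k * w k = (ρ * (A j * A k)).trace * c j := by
      intro k
      rw [hRentry]
      have : c j * c k * w k = c j := by rw [mul_assoc, hcw, mul_one]
      rw [mul_assoc, this]
    rw [Finset.sum_congr rfl fun k _ => this k, ← Finset.sum_mul, hsumtr' j]
    rw [← hww j, mul_assoc, hwc j, mul_one]
  have hSw : S *ᵥ w = w := by
    have h1 : (G + R) *ᵥ w = (S + S) *ᵥ w := by rw [hGRS]
    rw [Matrix.add_mulVec, Matrix.add_mulVec, hGw, hRw] at h1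
    funext jj
    have h2 := congrFun h1 jj
    simp only [Pi.add_apply] at h2
    exact (half_cancel_c h2.symm)
  -- W facts
  have hXW : ∀ X : Matrix (Fin m) (Fin m) ℂ, Xᴴ = X → X *ᵥ w = w → X * W = W ∧ W * X = W := by
    intro X hXh hXw
    constructor
    · ext j k
      rw [Matrix.mul_apply]
      have : ∀ l, X j l * W l k = X j l * w l * w k := by
        intro l; rw [hWdef, Matrix.vecMulVec_apply, mul_assoc]
      rw [Finset.sum_congr rfl fun l _ => this l, ← Finset.sum_mul]
      have : ∑ l, X j l * w l = w j := by
        have := congrFun hXw j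
        rw [Matrix.mulVec, dotProduct] at this
        exact this
      rw [this, hWdef, Matrix.vecMulVec_apply]
    · ext j k
      rw [Matrix.mul_apply]
      have h1 : ∀ l, W j l * X l k = w j * (w l * X l k) := by
        intro l; rw [hWdef, Matrix.vecMulVec_apply, mul_assoc]
      rw [Finset.sum_congr rfl fun l _ => h1 l, ← Finset.mul_sum]
      have h2 : ∑ l, w l * X l k = w k := by
        have h3 : ∑ l, w l * X l k = star (∑ l, (Xᴴ) k l * w l) := by
          rw [star_sum]
          refine Finset.sum_congr rfl fun l _ => ?_
          rw [star_mul', hwstar, Matrix.conjTranspose_apply, star_star]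
          exact mul_comm _ _
        rw [h3, hXh]
        have := congrFun hXw k
        rw [Matrix.mulVec, dotProduct] at this
        rw [this, hwstar]
      rw [h2, hWdef, Matrix.vecMulVec_apply]
  have hWW : W * W = W := by
    have hsum1 : ∑ l, w l * w l = 1 := by
      have : ∑ l, w l * w l = ∑ l, (ρ * A l).trace := by
        refine Finset.sum_congr rfl fun l _ => ?_
        rw [hww l, htr_real l]
      rw [this, ← Matrix.trace_sum]
      have : ∑ l, ρ * A l = ρ := by rw [← Matrix.mul_sum, hAsum, Matrix.mul_one]
      rw [this, hρtr]
    ext j k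
    rw [Matrix.mul_apply, hWdef, Matrix.vecMulVec_apply]
    have : ∀ l, Matrix.vecMulVec w w j l * Matrix.vecMulVec w w l k
        = w j * w k * (w l * w l) := by
      intro l; rw [Matrix.vecMulVec_apply, Matrix.vecMulVec_apply]; ring
    rw [Finset.sum_congr rfl fun l _ => this l, ← Finset.mul_sum, hsum1, mul_one]
  -- diag equality / trace
  have hdiag : ∀ j, G j j = S j j := by
    intro j
    have h1 := congrFun (congrFun hGRS j) j
    simp only [Matrix.add_apply] at h1
    have h2 : R j j = G j j := by rw [hRT, Matrix.transpose_apply]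
    rw [h2] at h1
    exact half_cancel_c h1
  have htrGS : G.trace = S.trace := by
    simp only [Matrix.trace, Matrix.diag]
    exact Finset.sum_congr rfl fun j _ => hdiag j
  -- Imp1 : G*G = G → G = R
  have hImp1 : G * G = G → G = R := by
    intro hGG
    have hfix : ∀ i, ∑ j, G j i • (σ * B j) = σ * B i := fun i => gram_fix hfG hGG i
    have hBfix : ∀ i, ∑ j, G j i • B j = B i := by
      intro i
      apply hcancel
      rw [Matrix.mul_sum]
      simp only [Matrix.mul_smul]
      exact hfix i
    have hBfixc : ∀ i, ∑ j, star (G j i) • B j = B i := by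
      intro i
      have h1 := congrArg Matrix.conjTranspose (hBfix i)
      simp only [Matrix.conjTranspose_sum, Matrix.conjTranspose_smul, hBh] at h1
      exact h1
    have hufix : ∀ i, ∑ j, G j i • (B j * σ) = B i * σ := by
      intro i
      have h1 := congrArg (fun M => M * σ) (hBfix i)
      simp only [Finset.sum_mul, Matrix.smul_mul] at h1
      exact h1
    have hvfixc : ∀ i, ∑ j, star (G j i) • (σ * B j) = σ * B i := by
      intro i
      have h1 := congrArg (fun M => σ * M) (hBfixc i)
      simp only [Matrix.mul_sum, Matrix.mul_smul] at h1
      exact h1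
    have hRG : R * G = R := by
      ext k i
      rw [Matrix.mul_apply]
      have h1 := gram_pair hfR (hufix i) k
      rw [← h1]
      exact Finset.sum_congr rfl fun j _ => mul_comm _ _
    have hGR_G : G * R = G := by
      ext k i
      rw [Matrix.mul_apply]
      have h1 := gram_pair hfG (hvfixc i) k
      rw [← h1]
      refine Finset.sum_congr rfl fun j _ => ?_
      rw [hRT, Matrix.transpose_apply, ← hghe j i]
      ring
    have hGR_R : G * R = R := by
      have h1 := congrArg Matrix.conjTranspose hRG
      rwa [Matrix.conjTranspose_mul, hGherm, hRherm] at h1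
    rw [← hGR_G, hGR_R]
  -- analytic part : 1 - G is PSD
  have hvH : ∀ j, (v j)ᴴ = c j • (A j * σ) := by
    intro j
    show (σ * B j)ᴴ = _
    simp only [hBdef]
    rw [Matrix.mul_smul, Matrix.conjTranspose_smul, Matrix.conjTranspose_mul, hσh, hAh, hcstar]
  have hGI : ((1 : Matrix (Fin m) (Fin m) ℂ) - G).PosSemidef := by
    refine Matrix.PosSemidef.of_dotProduct_mulVec_nonneg ?_ ?_
    · show (1 - G)ᴴ = 1 - G
      rw [Matrix.conjTranspose_sub, Matrix.conjTranspose_one, hGherm]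
    · intro x
      have hquad := gram_quad hfG x
      set Z : Matrix (Fin d) (Fin d) ℂ := ∑ j, x j • v j with hZdef
      choose E hEpsd hE using fun j => psd_sqrt_ex (hApsd j)
      have hEh : ∀ j, (E j)ᴴ = E j := fun j => (hEpsd j).1
      set sj : Fin m → ℂ := fun j => ((v j)ᴴ * Z).trace with hsjdef
      set T : ℝ := nsq Z with hTdef
      set a : ℝ := ∑ j, Complex.normSq (x j) with hadef
      set r : Fin m → ℝ := fun j => nsq (Z * E j) with hrdef
      -- B1 : ↑T = ∑ j, star (x j) * sj j
      have hB1 : ((T : ℝ) : ℂ) = ∑ j, star (x j) * sj j := by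
        rw [← trace_ctm Z]
        have hZH : Zᴴ = ∑ j, star (x j) • (v j)ᴴ := by
          rw [hZdef]
          simp only [Matrix.conjTranspose_sum, Matrix.conjTranspose_smul]
        rw [hZH, Finset.sum_mul, Matrix.trace_sum]
        simp only [Matrix.smul_mul, Matrix.trace_smul, smul_eq_mul]
        rfl
      -- B2 : sj in CS form
      have hB2 : ∀ j, sj j = c j * (((σ * E j)ᴴ * (Z * E j)).trace) := by
        intro j
        have hkey : ((σ * E j)ᴴ * (Z * E j)).trace = ((A j * σ) * Z).trace := by
          rw [Matrix.conjTranspose_mul, hEh, hσh, ← Matrix.mul_assoc,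
            Matrix.trace_mul_comm, ← Matrix.mul_assoc, ← Matrix.mul_assoc, hE j]
        rw [hkey]
        show ((v j)ᴴ * Z).trace = _
        rw [hvH j, Matrix.smul_mul, Matrix.trace_smul, smul_eq_mul]
      -- B3 : nsq (σ * E j) = p j
      have hB3 : ∀ j, nsq (σ * E j) = p j := by
        intro j
        have h1 : ((σ * E j)ᴴ * (σ * E j)).trace = ((p j : ℝ) : ℂ) := by
          rw [Matrix.conjTranspose_mul, hEh, hσh, trh (E j) (E j), hE j, htr_real j]
        rw [trace_ctm] at h1
        exact_mod_cast h1
      -- B4 : sum of r equals T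
      have hB4 : ∑ j, r j = T := by
        have h1 : ∀ j, ((r j : ℝ) : ℂ) = ((Zᴴ * Z) * A j).trace := by
          intro j
          rw [hrdef, ← trace_ctm (Z * E j)]
          rw [Matrix.conjTranspose_mul, hEh]
          rw [Matrix.trace_mul_comm (E j * Zᴴ) (Z * E j)]
          rw [Matrix.mul_assoc Z (E j) (E j * Zᴴ)]
          rw [← Matrix.mul_assoc (E j) (E j) Zᴴ, hE j]
          rw [Matrix.trace_mul_comm Z (A j * Zᴴ)]
          rw [Matrix.mul_assoc (A j) Zᴴ Z]
          rw [Matrix.trace_mul_comm (A j) (Zᴴ * Z)]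
        have h2 : ((∑ j, r j : ℝ) : ℂ) = ((T : ℝ) : ℂ) := by
          push_cast
          rw [Finset.sum_congr rfl fun j _ => h1 j]
          rw [← Matrix.trace_sum]
          have h3 : ∑ j, (Zᴴ * Z) * A j = Zᴴ * Z := by
            rw [← Matrix.mul_sum, hAsum, Matrix.mul_one]
          rw [h3, trace_ctm]
        exact_mod_cast h2
      -- B5 : per-j bound
      have hB5 : ∀ j, Complex.normSq (sj j) ≤ r j := by
        intro j
        have hcs := trace_ctm_cs (σ * E j) (Z * E j)
        rw [hB3 j] at hcs
        have hnc : Complex.normSq (c j) = (p j)⁻¹ := by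
          show Complex.normSq ((w j)⁻¹) = _
          rw [map_inv₀, hwj j, Complex.normSq_ofReal, Real.mul_self_sqrt (hp j).le]
        have h1 : Complex.normSq (sj j)
            = (p j)⁻¹ * Complex.normSq (((σ * E j)ᴴ * (Z * E j)).trace) := by
          rw [hB2 j, Complex.normSq_mul, hnc]
        rw [h1]
        have h2 : (p j)⁻¹ * Complex.normSq (((σ * E j)ᴴ * (Z * E j)).trace)
            ≤ (p j)⁻¹ * (p j * nsq (Z * E j)) := by
          apply mul_le_mul_of_nonneg_left hcs (inv_nonneg.mpr (hp j).le)
        calc (p j)⁻¹ * Complex.normSq (((σ * E j)ᴴ * (Z * E j)).trace)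
            ≤ (p j)⁻¹ * (p j * nsq (Z * E j)) := h2
          _ = r j := by
              rw [← mul_assoc, inv_mul_cancel₀ (ne_of_gt (hp j)), one_mul]
      -- B6 : T ≤ a
      have hTnn : 0 ≤ T := nsq_nonneg Z
      have hann : 0 ≤ a := Finset.sum_nonneg fun j _ => Complex.normSq_nonneg _
      have hTa : T ≤ a := by
        have h1 : T ≤ ∑ j, ‖x j‖ * ‖sj j‖ := by
          calc T = ‖((T : ℝ) : ℂ)‖ := by
                rw [Complex.norm_real, Real.norm_eq_abs, abs_of_nonneg hTnn]
            _ = ‖∑ j, star (x j) * sj j‖ := by rw [hB1]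
            _ ≤ ∑ j, ‖star (x j) * sj j‖ := norm_sum_le _ _
            _ = ∑ j, ‖x j‖ * ‖sj j‖ := by
                refine Finset.sum_congr rfl fun j _ => ?_
                rw [norm_mul, norm_star]
        have h2 : (∑ j, ‖x j‖ * ‖sj j‖) ^ 2
            ≤ (∑ j, ‖x j‖ ^ 2) * (∑ j, ‖sj j‖ ^ 2) :=
          Finset.sum_mul_sq_le_sq_mul_sq Finset.univ _ _
        have hxa : ∑ j, ‖x j‖ ^ 2 = a := by
          refine Finset.sum_congr rfl fun j _ => ?_
          rw [Complex.sq_norm]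
        have hsr : ∑ j, ‖sj j‖ ^ 2 ≤ T := by
          rw [← hB4]
          refine Finset.sum_le_sum fun j _ => ?_
          rw [Complex.sq_norm]
          exact hB5 j
        have h3 : T ^ 2 ≤ a * T := by
          calc T ^ 2 ≤ (∑ j, ‖x j‖ * ‖sj j‖) ^ 2 := by
                apply pow_le_pow_left₀ hTnn h1
            _ ≤ (∑ j, ‖x j‖ ^ 2) * (∑ j, ‖sj j‖ ^ 2) := h2
            _ ≤ a * T := by
                rw [hxa]
                exact mul_le_mul_of_nonneg_left hsr hann
        rcases eq_or_lt_of_le hTnn with hT0 | hT0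
        · rw [← hT0]; exact hann
        · have h4 : T * T ≤ a * T := by rw [← sq]; exact h3
          exact (mul_le_mul_iff_of_pos_right hT0).mp h4
      -- assemble
      have hdxx : star x ⬝ᵥ x = ((a : ℝ) : ℂ) := by
        rw [dotProduct, hadef]
        push_cast
        refine Finset.sum_congr rfl fun j _ => ?_
        rw [Pi.star_apply, mul_comm, Complex.star_def, Complex.mul_conj]
      have hGx : star x ⬝ᵥ G *ᵥ x = ((T : ℝ) : ℂ) := by
        rw [hquad, trace_ctm]
      rw [Matrix.sub_mulVec, Matrix.one_mulVec, dotProduct_sub, hdxx, hGx,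
        ← Complex.ofReal_sub]
      exact Complex.zero_le_real.mpr (by linarith [hTa])
  have hImp2 : S * S = S → G = S := fun hSS =>
    core_proj hSherm hSS hGpsd hGI hRpsd hGRS htrGS
  have hWfG := hXW G hGherm hGw
  have hWfR := hXW R hRherm hRw
  have hWfS := hXW S hSherm hSw
  have hbarS := bar_iff hWfS.1 hWfS.2 hWW
  have hbarL := bar_iff hWfG.1 hWfG.2 hWW
  have hbarR := bar_iff hWfR.1 hWfR.2 hWW
  have hSbar : GmSbar ρ A = S - W := rfl
  have hLbar : GmLbar ρ A = G - W := rfl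
  have hRbar : GmRbar ρ A = R - W := rfl
  have hRtoG : R * R = R → G * G = G := by
    intro hRR
    have hGT : G = Rᵀ := by rw [hRT, Matrix.transpose_transpose]
    rw [hGT]
    calc Rᵀ * Rᵀ = (R * R)ᵀ := (Matrix.transpose_mul R R).symm
      _ = Rᵀ := by rw [hRR]
  have hGtoS : G * G = G → S * S = S := by
    intro hGG
    have hGR := hImp1 hGG
    have hSG : S = G := by
      apply half_cancel
      rw [← hGRS, ← hGR]
    rw [hSG]
    exact hGG
  have hSS : S * S = S := by
    rcases h with hc | hc | hc | hc | hc | hc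
    · exact hc
    · exact hGtoS hc
    · exact hGtoS (hRtoG hc)
    · rw [hSbar] at hc
      exact hbarS.mp hc
    · rw [hLbar] at hc
      exact hGtoS (hbarL.mp hc)
    · rw [hRbar] at hc
      exact hGtoS (hRtoG (hbarR.mp hc))
  have hGS : G = S := hImp2 hSS
  have hRS : R = S := by
    have h1 : G + R = S + S := hGRS
    rw [hGS] at h1
    exact add_left_cancel h1
  refine ⟨hSS, ?_, ?_, ?_, ?_, ?_⟩
  · rw [hGS]; exact hSS
  · rw [hRS]; exact hSS
  · rw [hSbar]
    exact hbarS.mpr hSS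
  · rw [hLbar]
    exact hbarL.mpr (by rw [hGS]; exact hSS)
  · rw [hRbar]
    exact hbarR.mpr (by rw [hRS]; exact hSS)
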